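/- arXiv:1004.1627 — 5 statements merged into one kernel-verified Lean document; each statement's English description precedes it below -/
import Mathlib

section
/- Let m₁, m₂ be positive integers and P the (m₁+m₂)×(m₁+m₂) block projection matrix P = [[I_{m₁}, 0], [0, 0]]. Let p, q, q̄, p̄ be smooth matrix-valued functions on ℝ² (variables (x,t)) of sizes m₁×m₁, m₁×m₂, m₂×m₁, m₂×m₂ respectively, and set φ = [[p, q], [−q̄, −p̄]]. Then φ satisfies the equation [P, φ_t] = {P, φ_{xx}} + 2 (P φ_x)[P, φ] − 2 [P, φ] φ_x P identically if and only if (p_x + q q̄)_x = 0, q_t = q_{xx} + 2 p_x q, and q̄_t = −q̄_{xx} − 2 q̄ p_x hold. In particular, if additionally p_x = −q q̄, then φ satisfies this equation if and only if the matrix NLS system q_t = q_{xx} − 2 q q̄ q, q̄_t = −q̄_{xx} + 2 q̄ q q̄ holds. -/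
open Matrix

noncomputable section

/-- Entrywise partial derivative with respect to the first variable. -/
def pd1 {α β : Type*} (M : ℝ → ℝ → Matrix α β ℂ) : ℝ → ℝ → Matrix α β ℂ :=
  fun x t => Matrix.of fun i j => deriv (fun x' => M x' t i j) x

/-- Entrywise partial derivative with respect to the second variable. -/
def pd2 {α β : Type*} (M : ℝ → ℝ → Matrix α β ℂ) : ℝ → ℝ → Matrix α β ℂ :=
  fun x t => Matrix.of fun i j => deriv (fun t' => M x t' i j) t

/-- Entrywise smoothness of a matrix-valued function on ℝ². -/
def MSmooth {α β : Type*} (M : ℝ → ℝ → Matrix α β ℂ) : Prop :=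
  ∀ i j, ContDiff ℝ (⊤ : ℕ∞) fun v : ℝ × ℝ => M v.1 v.2 i j

/-- The equation `[P, φ_t] = {P, φ_xx} + 2 (P φ_x)[P, φ] − 2 [P, φ] φ_x P`,
imposed identically on ℝ². -/
def PhiEq {n : Type*} [Fintype n] (P : Matrix n n ℂ) (φ : ℝ → ℝ → Matrix n n ℂ) : Prop :=
  ∀ x t : ℝ,
    P * pd2 φ x t - pd2 φ x t * P =
      (P * pd1 (pd1 φ) x t + pd1 (pd1 φ) x t * P)
        + (2 : ℂ) • ((P * pd1 φ x t) * (P * φ x t - φ x t * P))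
        - (2 : ℂ) • ((P * φ x t - φ x t * P) * (pd1 φ x t * P))

/-!
Since `P = diag(I, 0)`, the commutator `[P, φ] = [[0, q], [q̄, 0]]` is block off-diagonal and the
equation splits into its four blocks. The `(1,1)` block reads `2 (p_xx + q_x q̄ + q q̄_x) = 0`, which
is `(p_x + q q̄)_x = 0` by the product rule; the off-diagonal blocks are the evolution equations of
`q` and `q̄`, and the `(2,2)` block is `0 = 0`. Under `p_x = -q q̄` the first condition holds
identically and substituting `p_x` in the other two gives the matrix NLS system.
-/

section

variable {α β γ δ : Type*}

lemma pd1_fromBlocks (A : ℝ → ℝ → Matrix α γ ℂ) (B : ℝ → ℝ → Matrix α δ ℂ)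
    (C : ℝ → ℝ → Matrix β γ ℂ) (D : ℝ → ℝ → Matrix β δ ℂ) :
    pd1 (fun x t => fromBlocks (A x t) (B x t) (C x t) (D x t)) =
      fun x t => fromBlocks (pd1 A x t) (pd1 B x t) (pd1 C x t) (pd1 D x t) := by
  funext x t
  ext (i | i) (j | j) <;> rfl

lemma pd2_fromBlocks (A : ℝ → ℝ → Matrix α γ ℂ) (B : ℝ → ℝ → Matrix α δ ℂ)
    (C : ℝ → ℝ → Matrix β γ ℂ) (D : ℝ → ℝ → Matrix β δ ℂ) :
    pd2 (fun x t => fromBlocks (A x t) (B x t) (C x t) (D x t)) =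
      fun x t => fromBlocks (pd2 A x t) (pd2 B x t) (pd2 C x t) (pd2 D x t) := by
  funext x t
  ext (i | i) (j | j) <;> rfl

lemma pd1_neg (M : ℝ → ℝ → Matrix α β ℂ) : pd1 (fun x t => -M x t) = fun x t => -pd1 M x t := by
  funext x t
  ext i j
  simp only [pd1, Matrix.neg_apply, of_apply, deriv.fun_neg]

lemma pd2_neg (M : ℝ → ℝ → Matrix α β ℂ) : pd2 (fun x t => -M x t) = fun x t => -pd2 M x t := by
  funext x t
  ext i j
  simp only [pd2, Matrix.neg_apply, of_apply, deriv.fun_neg]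

lemma DifferentiableAt.hasDerivAt_slice_fst {E : Type*} [NormedAddCommGroup E] [NormedSpace ℝ E]
    {f : ℝ × ℝ → E} {x t : ℝ} (hf : DifferentiableAt ℝ f (x, t)) :
    HasDerivAt (fun x' => f (x', t)) (fderiv ℝ f (x, t) (1, 0)) x :=
  hf.hasFDerivAt.comp_hasDerivAt x ((hasDerivAt_id x).prodMk (hasDerivAt_const x t))

theorem msmooth_pd1 {M : ℝ → ℝ → Matrix α β ℂ} (hM : MSmooth M) : MSmooth (pd1 M) := by
  intro i j
  have hdiff := (hM i j).differentiable (by simp)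
  have hpd1 : (fun v : ℝ × ℝ => pd1 M v.1 v.2 i j) =
      fun v => fderiv ℝ (fun v : ℝ × ℝ => M v.1 v.2 i j) v (1, 0) :=
    funext fun v => (hdiff v).hasDerivAt_slice_fst.deriv
  rw [hpd1]
  exact ((hM i j).fderiv_right (m := ((⊤ : ℕ∞) : WithTop ℕ∞)) le_rfl).clm_apply contDiff_const

theorem MSmooth.add {A B : ℝ → ℝ → Matrix α β ℂ} (hA : MSmooth A) (hB : MSmooth B) :
    MSmooth fun x t => A x t + B x t :=
  fun i j => (hA i j).add (hB i j)

theorem MSmooth.mul [Fintype β] {A : ℝ → ℝ → Matrix α β ℂ} {B : ℝ → ℝ → Matrix β γ ℂ}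
    (hA : MSmooth A) (hB : MSmooth B) : MSmooth fun x t => A x t * B x t :=
  fun i j => ContDiff.sum fun k _ => (hA i k).mul (hB k j)

lemma MSmooth.hasDerivAt_pd1 {M : ℝ → ℝ → Matrix α β ℂ} (hM : MSmooth M) (x t : ℝ)
    (i : α) (j : β) : HasDerivAt (fun x' => M x' t i j) (pd1 M x t i j) x :=
  (((hM i j).differentiable (by simp)).comp
    (differentiable_id.prodMk (differentiable_const t)) x).hasDerivAt

lemma pd1_add {A B : ℝ → ℝ → Matrix α β ℂ} (hA : MSmooth A) (hB : MSmooth B) :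
    pd1 (fun x t => A x t + B x t) = fun x t => pd1 A x t + pd1 B x t := by
  funext x t
  ext i j
  exact ((hA.hasDerivAt_pd1 x t i j).add (hB.hasDerivAt_pd1 x t i j)).deriv

lemma pd1_mul [Fintype β] {A : ℝ → ℝ → Matrix α β ℂ} {B : ℝ → ℝ → Matrix β γ ℂ}
    (hA : MSmooth A) (hB : MSmooth B) :
    pd1 (fun x t => A x t * B x t) = fun x t => pd1 A x t * B x t + A x t * pd1 B x t := by
  funext x t
  ext i j
  simp only [Matrix.add_apply, Matrix.mul_apply, ← Finset.sum_add_distrib]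
  exact (HasDerivAt.fun_sum fun k _ =>
    (hA.hasDerivAt_pd1 x t i k).mul (hB.hasDerivAt_pd1 x t k j)).deriv

theorem phiEq_fromBlocks_iff [Fintype α] [Fintype β] [DecidableEq α]
    (p : ℝ → ℝ → Matrix α α ℂ) (q : ℝ → ℝ → Matrix α β ℂ)
    (qb : ℝ → ℝ → Matrix β α ℂ) (pb : ℝ → ℝ → Matrix β β ℂ) :
    PhiEq (fromBlocks 1 0 0 0) (fun x t => fromBlocks (p x t) (q x t) (-qb x t) (-pb x t)) ↔
      ∀ x t : ℝ,
        pd1 (pd1 p) x t + (pd1 q x t * qb x t + q x t * pd1 qb x t) = 0 ∧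
        pd2 q x t = pd1 (pd1 q) x t + (2 : ℂ) • (pd1 p x t * q x t) ∧
        pd2 qb x t = -pd1 (pd1 qb) x t - (2 : ℂ) • (qb x t * pd1 p x t) := by
  simp only [PhiEq, pd1_fromBlocks, pd1_neg, pd2_fromBlocks, pd2_neg]
  refine forall₂_congr fun x t => ?_
  simp only [sub_eq_add_neg, fromBlocks_multiply, fromBlocks_add, fromBlocks_smul, fromBlocks_neg,
    fromBlocks_inj, Matrix.one_mul, Matrix.mul_one, Matrix.zero_mul, Matrix.mul_zero, add_zero,
    zero_add, add_neg_cancel, smul_zero, neg_zero, Matrix.mul_neg, neg_neg, and_true]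
  refine and_congr_left' ⟨fun h => ?_, fun h => ?_⟩
  · linear_combination (norm := module) (-2⁻¹ : ℂ) • h
  · linear_combination (norm := module) (-2 : ℂ) • h

end

theorem statement0_general (m₁ m₂ : ℕ)
    (p : ℝ → ℝ → Matrix (Fin m₁) (Fin m₁) ℂ)
    (q : ℝ → ℝ → Matrix (Fin m₁) (Fin m₂) ℂ)
    (qb : ℝ → ℝ → Matrix (Fin m₂) (Fin m₁) ℂ)
    (pb : ℝ → ℝ → Matrix (Fin m₂) (Fin m₂) ℂ)
    (hp : MSmooth p) (hq : MSmooth q) (hqb : MSmooth qb)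
    (P : Matrix (Fin m₁ ⊕ Fin m₂) (Fin m₁ ⊕ Fin m₂) ℂ)
    (hP : P = Matrix.fromBlocks 1 0 0 0)
    (φ : ℝ → ℝ → Matrix (Fin m₁ ⊕ Fin m₂) (Fin m₁ ⊕ Fin m₂) ℂ)
    (hφ : φ = fun x t => Matrix.fromBlocks (p x t) (q x t) (-(qb x t)) (-(pb x t))) :
    (PhiEq P φ ↔
      (∀ x t : ℝ,
        pd1 (fun x t => pd1 p x t + q x t * qb x t) x t = 0 ∧
        pd2 q x t = pd1 (pd1 q) x t + (2 : ℂ) • (pd1 p x t * q x t) ∧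
        pd2 qb x t = -(pd1 (pd1 qb) x t) - (2 : ℂ) • (qb x t * pd1 p x t)))
    ∧ ((∀ x t : ℝ, pd1 p x t = -(q x t * qb x t)) →
       (PhiEq P φ ↔
         (∀ x t : ℝ,
           pd2 q x t = pd1 (pd1 q) x t - (2 : ℂ) • (q x t * qb x t * q x t) ∧
           pd2 qb x t = -(pd1 (pd1 qb) x t) + (2 : ℂ) • (qb x t * q x t * qb x t)))) := by
  subst hP hφ
  have hconservation : pd1 (fun x t => pd1 p x t + q x t * qb x t) =
      fun x t => pd1 (pd1 p) x t + (pd1 q x t * qb x t + q x t * pd1 qb x t) := by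
    rw [pd1_add (msmooth_pd1 hp) (hq.mul hqb), pd1_mul hq hqb]
  rw [hconservation, phiEq_fromBlocks_iff]
  refine ⟨Iff.rfl, fun hpx => forall₂_congr fun x t => ?_⟩
  have hconserved : pd1 (pd1 p) x t + (pd1 q x t * qb x t + q x t * pd1 qb x t) = 0 := by
    rw [← congrFun₂ hconservation x t]
    simp only [hpx, neg_add_cancel]
    ext i j
    simp [pd1]
  simp only [hconserved, hpx, true_and, Matrix.neg_mul, Matrix.mul_neg, smul_neg, sub_neg_eq_add,
    ← sub_eq_add_neg, Matrix.mul_assoc]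

theorem statement0 (m₁ m₂ : ℕ) (hm₁ : 0 < m₁) (hm₂ : 0 < m₂)
    (p : ℝ → ℝ → Matrix (Fin m₁) (Fin m₁) ℂ)
    (q : ℝ → ℝ → Matrix (Fin m₁) (Fin m₂) ℂ)
    (qb : ℝ → ℝ → Matrix (Fin m₂) (Fin m₁) ℂ)
    (pb : ℝ → ℝ → Matrix (Fin m₂) (Fin m₂) ℂ)
    (hp : MSmooth p) (hq : MSmooth q) (hqb : MSmooth qb) (hpb : MSmooth pb)
    (P : Matrix (Fin m₁ ⊕ Fin m₂) (Fin m₁ ⊕ Fin m₂) ℂ)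
    (hP : P = Matrix.fromBlocks 1 0 0 0)
    (φ : ℝ → ℝ → Matrix (Fin m₁ ⊕ Fin m₂) (Fin m₁ ⊕ Fin m₂) ℂ)
    (hφ : φ = fun x t => Matrix.fromBlocks (p x t) (q x t) (-(qb x t)) (-(pb x t))) :
    (PhiEq P φ ↔
      (∀ x t : ℝ,
        pd1 (fun x t => pd1 p x t + q x t * qb x t) x t = 0 ∧
        pd2 q x t = pd1 (pd1 q) x t + (2 : ℂ) • (pd1 p x t * q x t) ∧
        pd2 qb x t = -(pd1 (pd1 qb) x t) - (2 : ℂ) • (qb x t * pd1 p x t)))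
    ∧ ((∀ x t : ℝ, pd1 p x t = -(q x t * qb x t)) →
       (PhiEq P φ ↔
         (∀ x t : ℝ,
           pd2 q x t = pd1 (pd1 q) x t - (2 : ℂ) • (q x t * qb x t * q x t) ∧
           pd2 qb x t = -(pd1 (pd1 qb) x t) + (2 : ℂ) • (qb x t * q x t * qb x t)))) :=
  statement0_general m₁ m₂ p q qb pb hp hq hqb P hP φ hφ
end
end

section
/- With the Sylvester data fixed, let Ξ(x) = exp(−x S) and Ξ̄(x) = exp(−x S̄), and assume that I_{n₁} − K Ξ̄(x) K̄ Ξ(x) and I_{n₂} − K̄ Ξ(x) K Ξ̄(x) are invertible for all x in an open interval. Define q(x) = U Ξ̄ (I_{n₂} − K̄ Ξ K Ξ̄)^{-1} V̄, q̄(x) = Ū Ξ (I_{n₁} − K Ξ̄ K̄ Ξ)^{-1} V, and p(x) = U Ξ̄ K̄ Ξ (I_{n₁} − K Ξ̄ K̄ Ξ)^{-1} V. Then p′(x) = −q(x) q̄(x) on that interval. -/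
/-!
Put W = Ξ̄ K̄ Ξ, so that p = U W (1 - K W)⁻¹ V. Since S and S̄ commute with their exponentials,
the second Sylvester equation gives W' = -Ξ̄ (S̄ K̄ + K̄ S) Ξ = -Ξ̄ V̄ Ū Ξ, and differentiating the
resolvent gives p' = U (1 - W K)⁻¹ W' (1 - K W)⁻¹ V. The push-through identity
(1 - B A)⁻¹ = 1 + B (1 - A B)⁻¹ A expresses both (1 - W K)⁻¹ and (1 - K̄ Ξ K Ξ̄)⁻¹ through
(1 - K W)⁻¹, after which p' = -q q̄ is a matter of expanding products.
-/

open Matrix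

noncomputable section

/-- Entrywise derivative of a matrix-valued function of one real variable. -/
def pd {α β : Type*} (M : ℝ → Matrix α β ℂ) : ℝ → Matrix α β ℂ :=
  fun x => Matrix.of fun i j => deriv (fun x' => M x' i j) x

namespace Matrix

variable {l m n : Type*} [Fintype l] [Fintype m] [Fintype n]

theorem inv_one_sub_mul_eq {α : Type*} [CommRing α] [DecidableEq m] [DecidableEq n]
    {A : Matrix m n α} {B : Matrix n m α} (h : IsUnit (1 - A * B)) :
    (1 - B * A)⁻¹ = 1 + B * (1 - A * B)⁻¹ * A := by
  have hAB : (1 - A * B) * (1 - A * B)⁻¹ = 1 :=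
    mul_nonsing_inv _ ((isUnit_iff_isUnit_det _).mp h)
  refine inv_eq_right_inv ?_
  calc (1 - B * A) * (1 + B * (1 - A * B)⁻¹ * A)
      = 1 - B * A + B * ((1 - A * B) * (1 - A * B)⁻¹) * A := by
        simp only [Matrix.mul_add, Matrix.sub_mul, Matrix.mul_sub, Matrix.mul_one,
          Matrix.one_mul, Matrix.mul_assoc]
    _ = 1 := by rw [hAB, Matrix.mul_one, sub_add_cancel]

-- Any submultiplicative norm would do: `HasDerivAt` only sees the (common) topology.
attribute [local instance] Matrix.linftyOpNormedAddCommGroup Matrix.linftyOpNormedSpace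
  Matrix.linftyOpNormedRing Matrix.linftyOpNormedAlgebra

theorem _root_.HasDerivAt.matrix_mul {A : ℝ → Matrix l m ℂ} {B : ℝ → Matrix m n ℂ}
    {A' : Matrix l m ℂ} {B' : Matrix m n ℂ} {x : ℝ} (hA : HasDerivAt A A' x)
    (hB : HasDerivAt B B' x) :
    HasDerivAt (fun t => A t * B t) (A' * B x + A x * B') x := by
  have h :=
    (mulLinearMap ℝ).toContinuousBilinearMap.hasDerivAt_of_bilinear (fun _ => hA) (fun _ => hB)
  simp only [LinearMap.toContinuousBilinearMap_apply, mulLinearMap_apply_apply, add_comm] at h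
  exact h

theorem _root_.HasDerivAt.matrix_inv [DecidableEq n] {F : ℝ → Matrix n n ℂ}
    {F' : Matrix n n ℂ} {x : ℝ} (hF : HasDerivAt F F' x) (hu : IsUnit (F x)) :
    HasDerivAt (fun t => (F t)⁻¹) (-((F x)⁻¹ * F' * (F x)⁻¹)) x := by
  have h := (hasFDerivAt_ringInverse (𝕜 := ℝ) hu.unit).comp_hasDerivAt x hF
  have hcoe : ((hu.unit⁻¹ : (Matrix n n ℂ)ˣ) : Matrix n n ℂ) = (F x)⁻¹ := by
    rw [coe_units_inv, hu.unit_spec]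
  simp only [Function.comp_def, ← nonsing_inv_eq_ringInverse, hcoe, _root_.neg_apply,
    ContinuousLinearMap.mulLeftRight_apply] at h
  exact h

theorem hasDerivAt_exp_neg_smul [DecidableEq n] (S : Matrix n n ℂ) (x : ℝ) :
    HasDerivAt (fun t : ℝ => NormedSpace.exp (-((t : ℂ) • S)))
      (-(S * NormedSpace.exp (-((x : ℂ) • S)))) x := by
  have h :=
    (hasDerivAt_exp_smul_const' (𝕂 := ℂ) (-S) (x : ℂ)).scomp x Complex.ofRealCLM.hasDerivAt
  simp only [Function.comp_def, Complex.ofRealCLM_apply, Complex.ofReal_one, one_smul, smul_neg,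
    neg_mul] at h
  exact h

theorem _root_.pd_eq_of_hasDerivAt {M : ℝ → Matrix m n ℂ} {M' : Matrix m n ℂ} {x : ℝ}
    (h : HasDerivAt M M' x) : pd M x = M' := by
  ext i j
  exact ((entryLinearMap ℝ ℂ i j).toContinuousLinearMap.hasFDerivAt.comp_hasDerivAt x h).deriv

theorem hasDerivAt_mul_inv_one_sub_mul {o : Type*} [Fintype o] [DecidableEq m] [DecidableEq n]
    (U : Matrix l n ℂ) (K : Matrix m n ℂ) (V : Matrix m o ℂ) {W : ℝ → Matrix n m ℂ}
    {W' : Matrix n m ℂ} {x : ℝ} (hW : HasDerivAt W W' x) (hu : IsUnit (1 - K * W x)) :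
    HasDerivAt (fun t => U * W t * (1 - K * W t)⁻¹ * V)
      (U * (1 - W x * K)⁻¹ * W' * (1 - K * W x)⁻¹ * V) x := by
  have hF : HasDerivAt (fun t => 1 - K * W t) (-(K * W')) x := by
    have h := ((hasDerivAt_const x K).matrix_mul hW).const_sub 1
    simp only [Matrix.zero_mul, zero_add] at h
    exact h
  refine ((((hasDerivAt_const x U).matrix_mul hW).matrix_mul (hF.matrix_inv hu)).matrix_mul
    (hasDerivAt_const x V)).congr_deriv ?_
  rw [inv_one_sub_mul_eq hu]
  simp only [Matrix.mul_add, Matrix.add_mul, Matrix.mul_neg, Matrix.neg_mul, neg_neg,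
    Matrix.zero_mul, Matrix.mul_zero, Matrix.mul_one, Matrix.mul_assoc, zero_add, add_zero]

theorem hasDerivAt_exp_mul_exp [DecidableEq m] [DecidableEq n] {S : Matrix m m ℂ}
    {T : Matrix n n ℂ} {K C : Matrix n m ℂ} (h : T * K + K * S = C) (x : ℝ) :
    HasDerivAt
      (fun t : ℝ => NormedSpace.exp (-((t : ℂ) • T)) * K * NormedSpace.exp (-((t : ℂ) • S)))
      (-(NormedSpace.exp (-((x : ℂ) • T)) * C * NormedSpace.exp (-((x : ℂ) • S)))) x := by
  refine (((hasDerivAt_exp_neg_smul T x).matrix_mul (hasDerivAt_const x K)).matrix_mul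
    (hasDerivAt_exp_neg_smul S x)).congr_deriv ?_
  have hT : T * NormedSpace.exp (-((x : ℂ) • T)) = NormedSpace.exp (-((x : ℂ) • T)) * T :=
    ((Commute.refl T).smul_right (x : ℂ)).neg_right.exp_right
  rw [← h, hT]
  simp only [Matrix.mul_add, Matrix.add_mul, Matrix.mul_neg, Matrix.neg_mul, Matrix.mul_zero,
    Matrix.mul_assoc, add_zero, neg_add]

end Matrix

theorem statement1_general (m₁ m₂ n₁ n₂ : ℕ)
    (S : Matrix (Fin n₁) (Fin n₁) ℂ) (Sb : Matrix (Fin n₂) (Fin n₂) ℂ)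
    (U : Matrix (Fin m₁) (Fin n₂) ℂ) (Ub : Matrix (Fin m₂) (Fin n₁) ℂ)
    (V : Matrix (Fin n₁) (Fin m₁) ℂ) (Vb : Matrix (Fin n₂) (Fin m₂) ℂ)
    (K : Matrix (Fin n₁) (Fin n₂) ℂ) (Kb : Matrix (Fin n₂) (Fin n₁) ℂ)
    (hSylb : Sb * Kb + Kb * S = Vb * Ub)
    (Ξ : ℝ → Matrix (Fin n₁) (Fin n₁) ℂ)
    (hΞ : Ξ = fun x : ℝ => NormedSpace.exp (-((x : ℂ) • S)))
    (Ξb : ℝ → Matrix (Fin n₂) (Fin n₂) ℂ)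
    (hΞb : Ξb = fun x : ℝ => NormedSpace.exp (-((x : ℂ) • Sb)))
    (a b : ℝ)
    (hinv₁ : ∀ x ∈ Set.Ioo a b, IsUnit (1 - K * Ξb x * Kb * Ξ x))
    (q : ℝ → Matrix (Fin m₁) (Fin m₂) ℂ)
    (hq : q = fun x => U * Ξb x * (1 - Kb * Ξ x * K * Ξb x)⁻¹ * Vb)
    (qb : ℝ → Matrix (Fin m₂) (Fin m₁) ℂ)
    (hqb : qb = fun x => Ub * Ξ x * (1 - K * Ξb x * Kb * Ξ x)⁻¹ * V)
    (p : ℝ → Matrix (Fin m₁) (Fin m₁) ℂ)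
    (hp : p = fun x => U * Ξb x * Kb * Ξ x * (1 - K * Ξb x * Kb * Ξ x)⁻¹ * V) :
    ∀ x ∈ Set.Ioo a b, pd p x = -(q x * qb x) := by
  intro x hx
  have hW : HasDerivAt (fun t => Ξb t * Kb * Ξ t) (-(Ξb x * (Vb * Ub) * Ξ x)) x := by
    subst hΞ hΞb
    exact Matrix.hasDerivAt_exp_mul_exp hSylb x
  have hu : IsUnit (1 - K * (Ξb x * Kb * Ξ x)) := by
    simpa only [Matrix.mul_assoc] using hinv₁ x hx
  have hp' : p = fun t => U * (Ξb t * Kb * Ξ t) * (1 - K * (Ξb t * Kb * Ξ t))⁻¹ * V := by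
    simp only [hp, Matrix.mul_assoc]
  have hqinv : (1 - Kb * (Ξ x * (K * Ξb x)))⁻¹
      = 1 + Kb * (Ξ x * ((1 - K * (Ξb x * (Kb * Ξ x)))⁻¹ * (K * Ξb x))) := by
    simpa only [Matrix.mul_assoc] using Matrix.inv_one_sub_mul_eq (A := K * Ξb x) (B := Kb * Ξ x)
      (by simpa only [Matrix.mul_assoc] using hu)
  rw [hp', pd_eq_of_hasDerivAt (Matrix.hasDerivAt_mul_inv_one_sub_mul U K V hW hu),
    Matrix.inv_one_sub_mul_eq hu, hq, hqb]
  simp only [Matrix.mul_assoc]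
  rw [hqinv]
  simp only [Matrix.mul_add, Matrix.add_mul, Matrix.mul_neg, Matrix.neg_mul, Matrix.one_mul,
    Matrix.mul_assoc]

theorem statement1 (m₁ m₂ n₁ n₂ : ℕ)
    (hm₁ : 0 < m₁) (hm₂ : 0 < m₂) (hn₁ : 0 < n₁) (hn₂ : 0 < n₂)
    (S : Matrix (Fin n₁) (Fin n₁) ℂ) (Sb : Matrix (Fin n₂) (Fin n₂) ℂ)
    (U : Matrix (Fin m₁) (Fin n₂) ℂ) (Ub : Matrix (Fin m₂) (Fin n₁) ℂ)
    (V : Matrix (Fin n₁) (Fin m₁) ℂ) (Vb : Matrix (Fin n₂) (Fin m₂) ℂ)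
    (K : Matrix (Fin n₁) (Fin n₂) ℂ) (Kb : Matrix (Fin n₂) (Fin n₁) ℂ)
    (hSyl : S * K + K * Sb = V * U) (hSylb : Sb * Kb + Kb * S = Vb * Ub)
    (Ξ : ℝ → Matrix (Fin n₁) (Fin n₁) ℂ)
    (hΞ : Ξ = fun x : ℝ => NormedSpace.exp (-((x : ℂ) • S)))
    (Ξb : ℝ → Matrix (Fin n₂) (Fin n₂) ℂ)
    (hΞb : Ξb = fun x : ℝ => NormedSpace.exp (-((x : ℂ) • Sb)))
    (a b : ℝ) (hab : a < b)
    (hinv₁ : ∀ x ∈ Set.Ioo a b, IsUnit (1 - K * Ξb x * Kb * Ξ x))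
    (hinv₂ : ∀ x ∈ Set.Ioo a b, IsUnit (1 - Kb * Ξ x * K * Ξb x))
    (q : ℝ → Matrix (Fin m₁) (Fin m₂) ℂ)
    (hq : q = fun x => U * Ξb x * (1 - Kb * Ξ x * K * Ξb x)⁻¹ * Vb)
    (qb : ℝ → Matrix (Fin m₂) (Fin m₁) ℂ)
    (hqb : qb = fun x => Ub * Ξ x * (1 - K * Ξb x * Kb * Ξ x)⁻¹ * V)
    (p : ℝ → Matrix (Fin m₁) (Fin m₁) ℂ)
    (hp : p = fun x => U * Ξb x * Kb * Ξ x * (1 - K * Ξb x * Kb * Ξ x)⁻¹ * V) :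
    ∀ x ∈ Set.Ioo a b, pd p x = -(q x * qb x) :=
  statement1_general m₁ m₂ n₁ n₂ S Sb U Ub V Vb K Kb hSylb Ξ hΞ Ξb hΞb a b hinv₁ q hq qb hqb p hp
end
end

section
/- With the Sylvester data fixed, let Ξ(x,t) = exp(−(x S + t S²)) and Ξ̄(x,t) = exp(−x S̄ + t S̄²), and assume that I_{n₁} − K Ξ̄ K̄ Ξ and I_{n₂} − K̄ Ξ K Ξ̄ are invertible for all (x,t) ∈ ℝ². Then q = U Ξ̄ (I_{n₂} − K̄ Ξ K Ξ̄)^{-1} V̄ and q̄ = Ū Ξ (I_{n₁} − K Ξ̄ K̄ Ξ)^{-1} V solve the matrix NLS system q_t = q_{xx} − 2 q q̄ q and q̄_t = −q̄_{xx} + 2 q̄ q q̄. -/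
/-!
Write `P = Ξ̄ (I - K̄ Ξ K Ξ̄)⁻¹` (`dressing K K̄ Ξ Ξ̄`) and `Y = P K̄ Ξ`, so that `q = U P V̄` and
`q̄ = Ū Q V` with `Q = dressing K̄ K Ξ̄ Ξ = Ξ (I - K Ξ̄ K̄ Ξ)⁻¹`. Since `Ξ, Ξ̄` are exponential
flows commuting with `S, S̄`, the Sylvester equations close the derivatives up:
`P_x = -S̄ P - Y V U P` and `Y_x = -(S̄ Y + Y V U Y + Y S)`, a matrix Riccati equation. Using the
push-through relation `(I - K̄ Ξ K Ξ̄)⁻¹ K̄ Ξ = K̄ Ξ (I - K Ξ̄ K̄ Ξ)⁻¹` and the Sylvester equations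
once more, the Riccati term factors as `S̄ Y + Y V U Y + Y S = P V̄ Ū Q`, so `U (-Y_x) V = q q̄`;
substituting into `q_xx - q_t` leaves exactly `2 q q̄ q`. The equation for `q̄` is the same
computation with the barred and unbarred data exchanged, which reverses the direction of time.
-/

open Matrix

noncomputable section

open NormedSpace

/-- Matrix spaces carry no canonical norm; differentiating entrywise matches `pd1` and `pd2`. -/
def HasEntrywiseDerivAt {α β : Type*} (F : ℝ → Matrix α β ℂ) (F' : Matrix α β ℂ) (x : ℝ) :
    Prop :=
  ∀ i j, HasDerivAt (fun y => F y i j) (F' i j) x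

namespace HasEntrywiseDerivAt

variable {α β γ : Type*} {F G : ℝ → Matrix α β ℂ} {F' G' : Matrix α β ℂ} {x : ℝ}

theorem const (C : Matrix α β ℂ) (x : ℝ) : HasEntrywiseDerivAt (fun _ => C) 0 x :=
  fun i j => hasDerivAt_const x (C i j)

theorem neg (hF : HasEntrywiseDerivAt F F' x) : HasEntrywiseDerivAt (fun y => -F y) (-F') x :=
  fun i j => (hF i j).neg

theorem sub (hF : HasEntrywiseDerivAt F F' x) (hG : HasEntrywiseDerivAt G G' x) :
    HasEntrywiseDerivAt (fun y => F y - G y) (F' - G') x :=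
  fun i j => (hF i j).sub (hG i j)

theorem mul [Fintype β] {H : ℝ → Matrix β γ ℂ} {H' : Matrix β γ ℂ}
    (hF : HasEntrywiseDerivAt F F' x) (hH : HasEntrywiseDerivAt H H' x) :
    HasEntrywiseDerivAt (fun y => F y * H y) (F' * H x + F x * H') x := fun i j => by
  have hterm : ∀ b ∈ Finset.univ, HasDerivAt (fun y => F y i b * H y b j)
      (F' i b * H x b j + F x i b * H' b j) x := fun b _ => (hF i b).mul (hH b j)
  simpa only [mul_apply, Matrix.add_apply, Finset.sum_add_distrib] using HasDerivAt.fun_sum hterm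

theorem const_mul [Fintype α] (C : Matrix γ α ℂ) (hF : HasEntrywiseDerivAt F F' x) :
    HasEntrywiseDerivAt (fun y => C * F y) (C * F') x := by
  simpa using (const C x).mul hF

theorem mul_const [Fintype β] (hF : HasEntrywiseDerivAt F F' x) (C : Matrix β γ ℂ) :
    HasEntrywiseDerivAt (fun y => F y * C) (F' * C) x := by
  simpa using hF.mul (const C x)

theorem congr_deriv (hF : HasEntrywiseDerivAt F F' x) (h : F' = G') :
    HasEntrywiseDerivAt F G' x :=
  h ▸ hF

theorem unique (hF : HasEntrywiseDerivAt F F' x) (hG : HasEntrywiseDerivAt F G' x) : F' = G' :=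
  Matrix.ext fun i j => (hF i j).unique (hG i j)

theorem pd1_eq {F : ℝ → ℝ → Matrix α β ℂ} {t : ℝ}
    (h : HasEntrywiseDerivAt (fun y => F y t) F' x) : pd1 F x t = F' :=
  Matrix.ext fun i j => (h i j).deriv

theorem pd2_eq {F : ℝ → ℝ → Matrix α β ℂ} {t : ℝ}
    (h : HasEntrywiseDerivAt (fun s => F x s) F' t) : pd2 F x t = F' :=
  Matrix.ext fun i j => (h i j).deriv

end HasEntrywiseDerivAt

section Inverse

variable {n : Type*} [Fintype n] [DecidableEq n] {N : ℝ → Matrix n n ℂ} {x : ℝ}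

theorem differentiableAt_det (hN : ∀ i j, DifferentiableAt ℝ (fun y => N y i j) x) :
    DifferentiableAt ℝ (fun y => (N y).det) x := by
  simp only [det_apply']
  exact DifferentiableAt.fun_sum fun σ _ =>
    (DifferentiableAt.fun_finsetProd fun i _ => hN (σ i) i).const_mul _

theorem differentiableAt_inv_apply (hN : ∀ i j, DifferentiableAt ℝ (fun y => N y i j) x)
    (hdet : (N x).det ≠ 0) (i j : n) :
    DifferentiableAt ℝ (fun y => (N y)⁻¹ i j) x := by
  simp only [inv_def, Matrix.smul_apply, adjugate_apply, Ring.inverse_eq_inv', smul_eq_mul]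
  refine ((differentiableAt_det hN).inv hdet).mul (differentiableAt_det fun a b => ?_)
  rcases eq_or_ne a j with rfl | h
  · simpa only [updateRow_self] using differentiableAt_const _
  · simpa only [updateRow_ne h] using hN a b

theorem HasEntrywiseDerivAt.inv {N' : Matrix n n ℂ} (hN : HasEntrywiseDerivAt N N' x)
    (hunit : ∀ y, IsUnit (N y)) :
    HasEntrywiseDerivAt (fun y => (N y)⁻¹) (-((N x)⁻¹ * N' * (N x)⁻¹)) x := by
  have hdet : ∀ y, IsUnit (N y).det := fun y => (isUnit_iff_isUnit_det _).mp (hunit y)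
  set D : Matrix n n ℂ := of fun i j => deriv (fun y => (N y)⁻¹ i j) x
  have hD : HasEntrywiseDerivAt (fun y => (N y)⁻¹) D x := fun i j =>
    (differentiableAt_inv_apply (fun a b => (hN a b).differentiableAt) (hdet x).ne_zero
      i j).hasDerivAt
  -- differentiate `N * N⁻¹ = 1`
  have hprod : N' * (N x)⁻¹ + N x * D = 0 := by
    refine (hN.mul hD).unique ?_
    simpa only [mul_nonsing_inv _ (hdet _)] using HasEntrywiseDerivAt.const 1 x
  convert hD using 1
  calc -((N x)⁻¹ * N' * (N x)⁻¹)
      = (N x)⁻¹ * (-(N' * (N x)⁻¹)) := by noncomm_ring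
    _ = (N x)⁻¹ * (N x * D) := by rw [eq_neg_of_add_eq_zero_right hprod]
    _ = D := by rw [← Matrix.mul_assoc, nonsing_inv_mul _ (hdet x), Matrix.one_mul]

end Inverse

section Exponential

variable {n : Type*} [Fintype n] [DecidableEq n]

theorem hasEntrywiseDerivAt_exp_ofReal_smul (P : Matrix n n ℂ) (s : ℝ) :
    HasEntrywiseDerivAt (fun y : ℝ => exp ((y : ℂ) • P)) (P * exp ((s : ℂ) • P)) s := by
  open scoped Matrix.Norms.Operator in
  have h : HasDerivAt (fun y : ℝ => exp (y • P)) (P * exp (s • P)) s :=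
    hasDerivAt_exp_smul_const' P s
  simp only [Complex.coe_smul]
  exact fun i j => (entryLinearMap ℝ ℂ i j).toContinuousLinearMap.hasFDerivAt.comp_hasDerivAt s h

theorem hasEntrywiseDerivAt_exp_ofReal_smul_add {P Q : Matrix n n ℂ} (hPQ : Commute P Q)
    (s : ℝ) :
    HasEntrywiseDerivAt (fun y : ℝ => exp ((y : ℂ) • P + Q)) (P * exp ((s : ℂ) • P + Q)) s := by
  have hexp : ∀ y : ℝ, exp ((y : ℂ) • P + Q) = exp ((y : ℂ) • P) * exp Q := fun y =>
    Matrix.exp_add_of_commute _ _ (hPQ.smul_left _)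
  simpa only [hexp, Matrix.mul_assoc] using
    (hasEntrywiseDerivAt_exp_ofReal_smul P s).mul_const (exp Q)

theorem hasEntrywiseDerivAt_exp_smul_add_smul_fst {P Q : Matrix n n ℂ} (hPQ : Commute P Q)
    (x t : ℝ) :
    HasEntrywiseDerivAt (fun y : ℝ => exp ((y : ℂ) • P + (t : ℂ) • Q))
      (P * exp ((x : ℂ) • P + (t : ℂ) • Q)) x :=
  hasEntrywiseDerivAt_exp_ofReal_smul_add (hPQ.smul_right _) x

theorem hasEntrywiseDerivAt_exp_smul_add_smul_snd {P Q : Matrix n n ℂ} (hPQ : Commute P Q)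
    (x t : ℝ) :
    HasEntrywiseDerivAt (fun s : ℝ => exp ((x : ℂ) • P + (s : ℂ) • Q))
      (Q * exp ((x : ℂ) • P + (t : ℂ) • Q)) t := by
  simpa only [add_comm] using hasEntrywiseDerivAt_exp_ofReal_smul_add (hPQ.symm.smul_right _) t

theorem commute_exp_smul_add_smul {R P Q : Matrix n n ℂ} (hP : Commute R P) (hQ : Commute R Q)
    (x t : ℂ) : Commute R (exp (x • P + t • Q)) :=
  ((hP.smul_right x).add_right (hQ.smul_right t)).exp_right

end Exponential

theorem Commute.matrix_left_comm {n p R : Type*} [Fintype n] [CommSemiring R]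
    {A B : Matrix n n R} (h : Commute A B) (Z : Matrix n p R) : A * (B * Z) = B * (A * Z) := by
  rw [← Matrix.mul_assoc, h.eq, Matrix.mul_assoc]

section Dressing

variable {n₁ n₂ : Type*} [Fintype n₁] [Fintype n₂] [DecidableEq n₂]

def dressing (K : Matrix n₁ n₂ ℂ) (Kb : Matrix n₂ n₁ ℂ) (a : Matrix n₁ n₁ ℂ)
    (b : Matrix n₂ n₂ ℂ) : Matrix n₂ n₂ ℂ :=
  b * (1 - Kb * a * K * b)⁻¹

variable {K : Matrix n₁ n₂ ℂ} {Kb : Matrix n₂ n₁ ℂ} {a : ℝ → Matrix n₁ n₁ ℂ}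
  {b : ℝ → Matrix n₂ n₂ ℂ} {T : Matrix n₁ n₁ ℂ} {Tb : Matrix n₂ n₂ ℂ} {s : ℝ}

theorem hasEntrywiseDerivAt_dressing (ha : HasEntrywiseDerivAt a (T * a s) s)
    (hb : HasEntrywiseDerivAt b (Tb * b s) s) (hTa : Commute T (a s))
    (hunit : ∀ y, IsUnit (1 - Kb * a y * K * b y)) :
    HasEntrywiseDerivAt (fun y => dressing K Kb (a y) (b y))
      (Tb * dressing K Kb (a s) (b s) + dressing K Kb (a s) (b s) * Kb * a s * (T * K + K * Tb)
        * dressing K Kb (a s) (b s)) s := by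
  have hN := (HasEntrywiseDerivAt.const 1 s).sub (((ha.const_mul Kb).mul_const K).mul hb)
  refine (hb.mul (hN.inv hunit)).congr_deriv ?_
  simp only [dressing, zero_sub, neg_neg, Matrix.mul_add, Matrix.add_mul, Matrix.mul_neg,
    Matrix.neg_mul, Matrix.mul_assoc, hTa.matrix_left_comm]

theorem hasEntrywiseDerivAt_dressing_mul (ha : HasEntrywiseDerivAt a (T * a s) s)
    (hb : HasEntrywiseDerivAt b (Tb * b s) s) (hTa : Commute T (a s))
    (hunit : ∀ y, IsUnit (1 - Kb * a y * K * b y)) :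
    HasEntrywiseDerivAt (fun y => dressing K Kb (a y) (b y) * Kb * a y)
      (Tb * (dressing K Kb (a s) (b s) * Kb * a s)
        + dressing K Kb (a s) (b s) * Kb * a s * (T * K + K * Tb)
          * (dressing K Kb (a s) (b s) * Kb * a s)
        + dressing K Kb (a s) (b s) * Kb * a s * T) s := by
  convert ((hasEntrywiseDerivAt_dressing ha hb hTa hunit).mul_const Kb).mul ha using 1
  simp only [Matrix.mul_add, Matrix.add_mul, Matrix.mul_assoc, hTa.eq]

end Dressing

section Riccati

variable {n₁ n₂ : Type*} [Fintype n₁] [DecidableEq n₁] [Fintype n₂] [DecidableEq n₂]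

theorem dressing_riccati {S a : Matrix n₁ n₁ ℂ} {Sb b : Matrix n₂ n₂ ℂ} {K : Matrix n₁ n₂ ℂ}
    {Kb : Matrix n₂ n₁ ℂ} (ha : Commute S a) (hb : Commute Sb b)
    (hN : IsUnit (1 - Kb * a * K * b)) (hM : IsUnit (1 - K * b * Kb * a)) :
    Sb * (dressing K Kb a b * Kb * a)
        + dressing K Kb a b * Kb * a * (S * K + K * Sb) * (dressing K Kb a b * Kb * a)
        + dressing K Kb a b * Kb * a * S
      = dressing K Kb a b * (Sb * Kb + Kb * S) * dressing Kb K b a := by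
  have hgN := nonsing_inv_mul _ ((isUnit_iff_isUnit_det _).mp hN)
  have hMh := mul_nonsing_inv _ ((isUnit_iff_isUnit_det _).mp hM)
  simp only [dressing]
  set g := (1 - Kb * a * K * b)⁻¹
  set h := (1 - K * b * Kb * a)⁻¹
  set Y := b * g * Kb * a
  have hY : b * Kb * a * h = Y := by
    calc b * Kb * a * h = b * (g * (1 - Kb * a * K * b)) * Kb * a * h := by
          rw [hgN, Matrix.mul_one]
      _ = b * g * Kb * a * ((1 - K * b * Kb * a) * h) := by
          simp only [Matrix.mul_sub, Matrix.sub_mul, Matrix.mul_one, Matrix.one_mul,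
            Matrix.mul_assoc]
      _ = Y := by rw [hMh, Matrix.mul_one]
  have hbg : b * g = b + Y * K * b := by
    calc b * g = b * ((g * (1 - Kb * a * K * b)) + g * (Kb * a * K * b)) := by
          rw [← Matrix.mul_add, sub_add_cancel, Matrix.mul_one]
      _ = b + Y * K * b := by
          rw [hgN]; simp only [Y, Matrix.mul_add, Matrix.mul_one, Matrix.mul_assoc]
  have hh : h = K * (b * Kb * a * h) + 1 := by
    rw [← hMh]; simp only [Matrix.sub_mul, Matrix.one_mul, Matrix.mul_assoc]; abel
  calc Sb * Y + Y * (S * K + K * Sb) * Y + Y * S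
      = Sb * (b * Kb * a * h) + Y * K * Sb * (b * Kb * a * h)
          + Y * S * (K * (b * Kb * a * h) + 1) := by
        rw [hY]; simp only [Matrix.mul_add, Matrix.add_mul, Matrix.mul_one, Matrix.mul_assoc]; abel
    _ = (b + Y * K * b) * Sb * Kb * a * h + Y * S * h := by
        rw [← hh]
        simp only [Matrix.add_mul, Matrix.mul_assoc, hb.matrix_left_comm]
    _ = b * g * (Sb * Kb + Kb * S) * (a * h) := by
        rw [← hbg]
        simp only [Y, Matrix.mul_add, Matrix.add_mul, Matrix.mul_assoc, ha.matrix_left_comm]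

end Riccati

section NLS

variable {m₁ m₂ n₁ n₂ : Type*} [Fintype m₁] [Fintype m₂] [Fintype n₁] [DecidableEq n₁]
  [Fintype n₂] [DecidableEq n₂]

theorem pd2_dressing_eq_smul_nls {S : Matrix n₁ n₁ ℂ} {Sb : Matrix n₂ n₂ ℂ}
    {U : Matrix m₁ n₂ ℂ} {Ub : Matrix m₂ n₁ ℂ} {V : Matrix n₁ m₁ ℂ} {Vb : Matrix n₂ m₂ ℂ}
    {K : Matrix n₁ n₂ ℂ} {Kb : Matrix n₂ n₁ ℂ}
    (hSyl : S * K + K * Sb = V * U) (hSylb : Sb * Kb + Kb * S = Vb * Ub) (ε : ℂ)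
    {A : ℝ → ℝ → Matrix n₁ n₁ ℂ} {B : ℝ → ℝ → Matrix n₂ n₂ ℂ}
    (hA₁ : ∀ x t, HasEntrywiseDerivAt (fun y => A y t) (-S * A x t) x)
    (hA₂ : ∀ x t, HasEntrywiseDerivAt (fun s => A x s) (-ε • S ^ 2 * A x t) t)
    (hB₁ : ∀ x t, HasEntrywiseDerivAt (fun y => B y t) (-Sb * B x t) x)
    (hB₂ : ∀ x t, HasEntrywiseDerivAt (fun s => B x s) (ε • Sb ^ 2 * B x t) t)
    (hA : ∀ x t, Commute S (A x t)) (hB : ∀ x t, Commute Sb (B x t))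
    (hN : ∀ x t, IsUnit (1 - Kb * A x t * K * B x t))
    (hM : ∀ x t, IsUnit (1 - K * B x t * Kb * A x t))
    {q : ℝ → ℝ → Matrix m₁ m₂ ℂ} (hq : q = fun x t => U * dressing K Kb (A x t) (B x t) * Vb)
    {qb : ℝ → ℝ → Matrix m₂ m₁ ℂ} (hqb : qb = fun x t => Ub * dressing Kb K (B x t) (A x t) * V)
    (x t : ℝ) :
    pd2 q x t = ε • (pd1 (pd1 q) x t - (2 : ℂ) • (q x t * qb x t * q x t)) := by
  set P := fun x t => dressing K Kb (A x t) (B x t)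
  set Y := fun x t => P x t * Kb * A x t
  have hPx : ∀ x t, HasEntrywiseDerivAt (fun y => P y t)
      (-(Sb * P x t) - Y x t * (V * U) * P x t) x := fun x t =>
    (hasEntrywiseDerivAt_dressing (hA₁ x t) (hB₁ x t) (hA x t).neg_left (hN · t)).congr_deriv
      (by simp only [← hSyl, P, Y, Matrix.neg_mul, Matrix.mul_neg, neg_add, Matrix.mul_add,
        Matrix.add_mul, sub_eq_add_neg])
  have hYx : ∀ x t, HasEntrywiseDerivAt (fun y => Y y t)
      (-(Sb * Y x t + Y x t * (V * U) * Y x t + Y x t * S)) x := fun x t =>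
    (hasEntrywiseDerivAt_dressing_mul (hA₁ x t) (hB₁ x t) (hA x t).neg_left (hN · t)).congr_deriv
      (by simp only [← hSyl, P, Y, Matrix.neg_mul, Matrix.mul_neg, neg_add, Matrix.mul_add,
        Matrix.add_mul])
  have hPt : HasEntrywiseDerivAt (fun s => P x s)
      (ε • (Sb ^ 2 * P x t - Y x t * (S * (V * U) - (V * U) * Sb) * P x t)) t :=
    (hasEntrywiseDerivAt_dressing (hA₂ x t) (hB₂ x t) (((hA x t).pow_left 2).smul_left _)
      (hN x ·)).congr_deriv
      (by simp only [← hSyl, P, Y, neg_smul, Matrix.smul_mul, Matrix.mul_smul, smul_sub, smul_add,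
        Matrix.neg_mul, Matrix.mul_neg, pow_two, Matrix.mul_add, Matrix.add_mul, Matrix.sub_mul,
        Matrix.mul_sub, Matrix.mul_assoc]; abel)
  have hqx : pd1 q = fun x t => U * (-(Sb * P x t) - Y x t * (V * U) * P x t) * Vb := by
    subst hq
    funext x t
    exact (((hPx x t).const_mul U).mul_const Vb).pd1_eq
  have hqxx : pd1 (pd1 q) x t = U * (-(Sb * (-(Sb * P x t) - Y x t * (V * U) * P x t))
      - (-(Sb * Y x t + Y x t * (V * U) * Y x t + Y x t * S) * (V * U) * P x t
        + Y x t * (V * U) * (-(Sb * P x t) - Y x t * (V * U) * P x t))) * Vb := by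
    rw [hqx]
    exact (((((hPx x t).const_mul Sb).neg.sub (((hYx x t).mul_const (V * U)).mul
      (hPx x t))).const_mul U).mul_const Vb).pd1_eq
  have hqt : pd2 q x t = U * (ε • (Sb ^ 2 * P x t - Y x t * (S * (V * U) - (V * U) * Sb) * P x t))
      * Vb := by
    subst hq
    exact ((hPt.const_mul U).mul_const Vb).pd2_eq
  have hR : Sb * Y x t + Y x t * (V * U) * Y x t + Y x t * S
      = P x t * (Vb * Ub) * dressing Kb K (B x t) (A x t) := by
    rw [← hSyl, ← hSylb]
    exact dressing_riccati (hA x t) (hB x t) (hN x t) (hM x t)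
  have hqqq : q x t * qb x t * q x t
      = U * (Sb * Y x t + Y x t * (V * U) * Y x t + Y x t * S) * V * (U * P x t * Vb) := by
    rw [hR, hq, hqb]
    simp only [P, Matrix.mul_assoc]
  rw [hqt, hqxx, hqqq, Matrix.mul_smul, Matrix.smul_mul]
  congr 1
  simp only [two_smul, pow_two, Matrix.mul_add, Matrix.add_mul, Matrix.mul_sub, Matrix.sub_mul,
    Matrix.mul_neg, Matrix.neg_mul, Matrix.mul_assoc]
  abel

end NLS

theorem statement2_general (m₁ m₂ n₁ n₂ : ℕ)
    (S : Matrix (Fin n₁) (Fin n₁) ℂ) (Sb : Matrix (Fin n₂) (Fin n₂) ℂ)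
    (U : Matrix (Fin m₁) (Fin n₂) ℂ) (Ub : Matrix (Fin m₂) (Fin n₁) ℂ)
    (V : Matrix (Fin n₁) (Fin m₁) ℂ) (Vb : Matrix (Fin n₂) (Fin m₂) ℂ)
    (K : Matrix (Fin n₁) (Fin n₂) ℂ) (Kb : Matrix (Fin n₂) (Fin n₁) ℂ)
    (hSyl : S * K + K * Sb = V * U) (hSylb : Sb * Kb + Kb * S = Vb * Ub)
    (Ξ : ℝ → ℝ → Matrix (Fin n₁) (Fin n₁) ℂ)
    (hΞ : Ξ = fun (x t : ℝ) => NormedSpace.exp (-((x : ℂ) • S + (t : ℂ) • S ^ 2)))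
    (Ξb : ℝ → ℝ → Matrix (Fin n₂) (Fin n₂) ℂ)
    (hΞb : Ξb = fun (x t : ℝ) => NormedSpace.exp (-((x : ℂ) • Sb) + (t : ℂ) • Sb ^ 2))
    (hinv₁ : ∀ x t : ℝ, IsUnit (1 - K * Ξb x t * Kb * Ξ x t))
    (hinv₂ : ∀ x t : ℝ, IsUnit (1 - Kb * Ξ x t * K * Ξb x t))
    (q : ℝ → ℝ → Matrix (Fin m₁) (Fin m₂) ℂ)
    (hq : q = fun x t => U * Ξb x t * (1 - Kb * Ξ x t * K * Ξb x t)⁻¹ * Vb)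
    (qb : ℝ → ℝ → Matrix (Fin m₂) (Fin m₁) ℂ)
    (hqb : qb = fun x t => Ub * Ξ x t * (1 - K * Ξb x t * Kb * Ξ x t)⁻¹ * V) :
    ∀ x t : ℝ,
      pd2 q x t = pd1 (pd1 q) x t - (2 : ℂ) • (q x t * qb x t * q x t) ∧
      pd2 qb x t = -(pd1 (pd1 qb) x t) + (2 : ℂ) • (qb x t * q x t * qb x t) := by
  replace hΞ : Ξ = fun (x t : ℝ) => exp ((x : ℂ) • (-S) + (t : ℂ) • (-S ^ 2)) := by
    rw [hΞ]; funext x t; congr 1; module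
  replace hΞb : Ξb = fun (x t : ℝ) => exp ((x : ℂ) • (-Sb) + (t : ℂ) • Sb ^ 2) := by
    rw [hΞb]; funext x t; congr 1; module
  have hq' : q = fun x t => U * dressing K Kb (Ξ x t) (Ξb x t) * Vb := by
    simp only [hq, dressing, Matrix.mul_assoc]
  have hqb' : qb = fun x t => Ub * dressing Kb K (Ξb x t) (Ξ x t) * V := by
    simp only [hqb, dressing, Matrix.mul_assoc]
  subst hΞ hΞb
  have hS : Commute (-S) (-S ^ 2) := ((Commute.refl S).pow_right 2).neg_left.neg_right
  have hSb : Commute (-Sb) (Sb ^ 2) := ((Commute.refl Sb).pow_right 2).neg_left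
  have hΞ₁ := hasEntrywiseDerivAt_exp_smul_add_smul_fst hS
  have hΞ₂ := hasEntrywiseDerivAt_exp_smul_add_smul_snd hS
  have hΞb₁ := hasEntrywiseDerivAt_exp_smul_add_smul_fst hSb
  have hΞb₂ := hasEntrywiseDerivAt_exp_smul_add_smul_snd hSb
  have hΞS := fun x t : ℝ => commute_exp_smul_add_smul (Commute.refl S).neg_right
    ((Commute.refl S).pow_right 2).neg_right (x : ℂ) t
  have hΞbSb := fun x t : ℝ => commute_exp_smul_add_smul (Commute.refl Sb).neg_right
    ((Commute.refl Sb).pow_right 2) (x : ℂ) t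
  intro x t
  constructor
  · simpa only [one_smul] using pd2_dressing_eq_smul_nls hSyl hSylb 1 hΞ₁
      (by simpa only [neg_smul, one_smul] using hΞ₂) hΞb₁ (by simpa only [one_smul] using hΞb₂)
      hΞS hΞbSb hinv₂ hinv₁ hq' hqb' x t
  · simpa only [neg_smul, one_smul, neg_sub', sub_neg_eq_add] using
      pd2_dressing_eq_smul_nls hSylb hSyl (-1) hΞb₁
      (by simpa only [neg_smul, neg_neg, one_smul] using hΞb₂) hΞ₁
      (by simpa only [neg_smul, one_smul] using hΞ₂) hΞbSb hΞS hinv₁ hinv₂ hqb' hq' x t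

theorem statement2 (m₁ m₂ n₁ n₂ : ℕ)
    (hm₁ : 0 < m₁) (hm₂ : 0 < m₂) (hn₁ : 0 < n₁) (hn₂ : 0 < n₂)
    (S : Matrix (Fin n₁) (Fin n₁) ℂ) (Sb : Matrix (Fin n₂) (Fin n₂) ℂ)
    (U : Matrix (Fin m₁) (Fin n₂) ℂ) (Ub : Matrix (Fin m₂) (Fin n₁) ℂ)
    (V : Matrix (Fin n₁) (Fin m₁) ℂ) (Vb : Matrix (Fin n₂) (Fin m₂) ℂ)
    (K : Matrix (Fin n₁) (Fin n₂) ℂ) (Kb : Matrix (Fin n₂) (Fin n₁) ℂ)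
    (hSyl : S * K + K * Sb = V * U) (hSylb : Sb * Kb + Kb * S = Vb * Ub)
    (Ξ : ℝ → ℝ → Matrix (Fin n₁) (Fin n₁) ℂ)
    (hΞ : Ξ = fun (x t : ℝ) => NormedSpace.exp (-((x : ℂ) • S + (t : ℂ) • S ^ 2)))
    (Ξb : ℝ → ℝ → Matrix (Fin n₂) (Fin n₂) ℂ)
    (hΞb : Ξb = fun (x t : ℝ) => NormedSpace.exp (-((x : ℂ) • Sb) + (t : ℂ) • Sb ^ 2))
    (hinv₁ : ∀ x t : ℝ, IsUnit (1 - K * Ξb x t * Kb * Ξ x t))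
    (hinv₂ : ∀ x t : ℝ, IsUnit (1 - Kb * Ξ x t * K * Ξb x t))
    (q : ℝ → ℝ → Matrix (Fin m₁) (Fin m₂) ℂ)
    (hq : q = fun x t => U * Ξb x t * (1 - Kb * Ξ x t * K * Ξb x t)⁻¹ * Vb)
    (qb : ℝ → ℝ → Matrix (Fin m₂) (Fin m₁) ℂ)
    (hqb : qb = fun x t => Ub * Ξ x t * (1 - K * Ξb x t * Kb * Ξ x t)⁻¹ * V) :
    ∀ x t : ℝ,
      pd2 q x t = pd1 (pd1 q) x t - (2 : ℂ) • (q x t * qb x t * q x t) ∧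
      pd2 qb x t = -(pd1 (pd1 qb) x t) + (2 : ℂ) • (qb x t * q x t * qb x t) :=
  statement2_general m₁ m₂ n₁ n₂ S Sb U Ub V Vb K Kb hSyl hSylb Ξ hΞ Ξb hΞb hinv₁ hinv₂ q hq qb hqb
end
end

section
/- Let 𝒮 be a smooth m×m-complex-matrix-valued function of (x,t) ∈ ℝ² with 𝒮² = I_m, and suppose that 𝒮_t = 𝒮_{xx} + 2 (ℱ (I_m + 𝒮))_x, where ℱ = −(1/2) 𝒮_x 𝒮. Then 𝒮 satisfies the generalized Heisenberg magnet equation 𝒮_t = (1/2) [𝒮, 𝒮_{xx}]. -/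
open Matrix

noncomputable section

/-!
Differentiating `𝒮² = 1` once and twice in `x` gives `𝒮_x 𝒮 = -𝒮 𝒮_x` and
`𝒮_xx 𝒮 + 2 𝒮_x² + 𝒮 𝒮_xx = 0`. The first relation makes `𝒮_x²` commute with `𝒮`, and with it the
right side `𝒮_xx + 2 (ℱ (1 + 𝒮))_x` of the evolution equation collapses to `-𝒮_xx 𝒮 - 𝒮_x²`,
which the second relation turns into `½ [𝒮, 𝒮_xx]`.
-/

theorem commute_mul_self_of_anticommute {R : Type*} [Ring R] {a b : R} (h : b * a + a * b = 0) :
    Commute (b * b) a := by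
  have hba : b * a = -(a * b) := eq_neg_of_add_eq_zero_left h
  calc b * b * a = b * (b * a) := mul_assoc b b a
    _ = a * (b * b) := by rw [hba, mul_neg, ← mul_assoc, hba, neg_mul, neg_neg, mul_assoc]

/-- For `s = 𝒮`, `s₁ = 𝒮_x`, `s₂ = 𝒮_xx`, the left side is `𝒮_xx + 2 (ℱ (1 + 𝒮))_x`. -/
theorem heisenberg_identity {R : Type*} [Ring R] [Algebra ℂ R] {s s₁ s₂ : R}
    (hs : s * s = 1) (hs₁ : s₁ * s + s * s₁ = 0)
    (hs₂ : s₂ * s + s₁ * s₁ + (s₁ * s₁ + s * s₂) = 0) :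
    s₂ + (2 : ℂ) • (-((1 / 2 : ℂ) • (s₂ * s + s₁ * s₁)) * (1 + s)
        + -((1 / 2 : ℂ) • (s₁ * s)) * s₁)
      = (1 / 2 : ℂ) • (s * s₂ - s₂ * s) := by
  have hcomm : s₁ * s₁ * s = s * (s₁ * s₁) := commute_mul_self_of_anticommute hs₁
  have hmid : s₁ * s * s₁ = -(s * (s₁ * s₁)) := by
    rw [eq_neg_of_add_eq_zero_left hs₁, neg_mul, mul_assoc]
  have hsq : s₁ * s₁ = (1 / 2 : ℂ) • (-(s₂ * s) - s * s₂) := by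
    linear_combination (norm := module) (1 / 2 : ℂ) • hs₂
  have hs₂s : s₂ * s * s = s₂ := by rw [mul_assoc, hs, mul_one]
  simp only [neg_mul, smul_mul_assoc, mul_add, add_mul, mul_one, hs₂s, hcomm, hmid]
  rw [hsq]
  module

/-- Matrices carry no canonical norm, so derivatives of matrix-valued functions are taken
entrywise. -/
def HasMatrixDerivAt {m n : Type*} (f : ℝ → Matrix m n ℂ) (f' : Matrix m n ℂ) (x : ℝ) : Prop :=
  ∀ i j, HasDerivAt (fun y => f y i j) (f' i j) x

namespace HasMatrixDerivAt

variable {l m n : Type*} {f g : ℝ → Matrix m n ℂ} {f' g' : Matrix m n ℂ} {x : ℝ}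

theorem const (c : Matrix m n ℂ) (x : ℝ) : HasMatrixDerivAt (fun _ => c) 0 x :=
  fun i j => hasDerivAt_const x (c i j)

theorem add (hf : HasMatrixDerivAt f f' x) (hg : HasMatrixDerivAt g g' x) :
    HasMatrixDerivAt (fun y => f y + g y) (f' + g') x :=
  fun i j => (hf i j).add (hg i j)

theorem const_add (c : Matrix m n ℂ) (hf : HasMatrixDerivAt f f' x) :
    HasMatrixDerivAt (fun y => c + f y) f' x :=
  fun i j => (hf i j).const_add (c i j)

theorem neg (hf : HasMatrixDerivAt f f' x) : HasMatrixDerivAt (fun y => -f y) (-f') x :=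
  fun i j => (hf i j).neg

theorem const_smul (c : ℂ) (hf : HasMatrixDerivAt f f' x) :
    HasMatrixDerivAt (fun y => c • f y) (c • f') x :=
  fun i j => (hf i j).const_mul c

theorem mul [Fintype m] {f : ℝ → Matrix l m ℂ} {f' : Matrix l m ℂ}
    (hf : HasMatrixDerivAt f f' x) (hg : HasMatrixDerivAt g g' x) :
    HasMatrixDerivAt (fun y => f y * g y) (f' * g x + f x * g') x := fun i j => by
  simp only [Matrix.mul_apply, Matrix.add_apply, ← Finset.sum_add_distrib]
  exact HasDerivAt.fun_sum fun k _ => (hf i k).mul (hg k j)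

theorem eq_zero_of_forall_eq {c : Matrix m n ℂ} (hf : HasMatrixDerivAt f f' x)
    (hc : ∀ y, f y = c) : f' = 0 := by
  obtain rfl : f = fun _ => c := funext hc
  ext i j
  exact (hf i j).unique (hasDerivAt_const x (c i j))

theorem pd1_eq {M : ℝ → ℝ → Matrix m n ℂ} {t : ℝ} (h : HasMatrixDerivAt (fun y => M y t) f' x) :
    pd1 M x t = f' := by
  ext i j
  exact (h i j).deriv

end HasMatrixDerivAt

theorem hasDerivAt_comp_prodMk_const {g : ℝ × ℝ → ℂ} {x t : ℝ}
    (hg : DifferentiableAt ℝ g (x, t)) :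
    HasDerivAt (fun y => g (y, t)) (fderiv ℝ g (x, t) (1, 0)) x :=
  hg.hasFDerivAt.comp_hasDerivAt x ((hasDerivAt_id x).prodMk (hasDerivAt_const x t))

namespace MSmooth

variable {m n : Type*} {M : ℝ → ℝ → Matrix m n ℂ}

theorem hasMatrixDerivAt_pd1 (h : MSmooth M) (x t : ℝ) :
    HasMatrixDerivAt (fun y => M y t) (pd1 M x t) x := fun i j => by
  have hd := hasDerivAt_comp_prodMk_const (((h i j).differentiable (by simp)) (x, t))
  simpa only [pd1, Matrix.of_apply, hd.deriv] using hd

theorem pd1 (h : MSmooth M) : MSmooth (pd1 M) := fun i j => by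
  have hpartial : (fun v : ℝ × ℝ => _root_.pd1 M v.1 v.2 i j)
      = fun v => fderiv ℝ (fun w : ℝ × ℝ => M w.1 w.2 i j) v (1, 0) := by
    funext v
    exact (hasDerivAt_comp_prodMk_const (((h i j).differentiable (by simp)) v)).deriv
  rw [hpartial]
  exact ((h i j).fderiv_right le_rfl).clm_apply contDiff_const

end MSmooth

theorem statement16_general (m : ℕ)
    (𝒮 : ℝ → ℝ → Matrix (Fin m) (Fin m) ℂ)
    (h𝒮 : MSmooth 𝒮)
    (h𝒮2 : ∀ x t : ℝ, 𝒮 x t * 𝒮 x t = 1)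
    (ℱ : ℝ → ℝ → Matrix (Fin m) (Fin m) ℂ)
    (hℱ : ℱ = fun x t => -((1 / 2 : ℂ) • (pd1 𝒮 x t * 𝒮 x t)))
    (heq : ∀ x t : ℝ,
      pd2 𝒮 x t = pd1 (pd1 𝒮) x t
        + (2 : ℂ) • pd1 (fun x t => ℱ x t * (1 + 𝒮 x t)) x t) :
    ∀ x t : ℝ,
      pd2 𝒮 x t =
        (1 / 2 : ℂ) • (𝒮 x t * pd1 (pd1 𝒮) x t - pd1 (pd1 𝒮) x t * 𝒮 x t) := by
  intro x t
  have hS y := h𝒮.hasMatrixDerivAt_pd1 y t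
  have hSx y := h𝒮.pd1.hasMatrixDerivAt_pd1 y t
  have hS2x y : pd1 𝒮 y t * 𝒮 y t + 𝒮 y t * pd1 𝒮 y t = 0 :=
    ((hS y).mul (hS y)).eq_zero_of_forall_eq (fun z => h𝒮2 z t)
  have hS2xx : pd1 (pd1 𝒮) x t * 𝒮 x t + pd1 𝒮 x t * pd1 𝒮 x t
      + (pd1 𝒮 x t * pd1 𝒮 x t + 𝒮 x t * pd1 (pd1 𝒮) x t) = 0 :=
    (((hSx x).mul (hS x)).add ((hS x).mul (hSx x))).eq_zero_of_forall_eq hS2x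
  have hFx : HasMatrixDerivAt (fun y => ℱ y t * (1 + 𝒮 y t))
      (-((1 / 2 : ℂ) • (pd1 (pd1 𝒮) x t * 𝒮 x t + pd1 𝒮 x t * pd1 𝒮 x t)) * (1 + 𝒮 x t)
        + -((1 / 2 : ℂ) • (pd1 𝒮 x t * 𝒮 x t)) * pd1 𝒮 x t) x := by
    subst hℱ
    exact ((((hSx x).mul (hS x)).const_smul _).neg.mul ((hS x).const_add 1))
  rw [heq, HasMatrixDerivAt.pd1_eq (M := fun x t => ℱ x t * (1 + 𝒮 x t)) hFx]
  exact heisenberg_identity (h𝒮2 x t) (hS2x x) hS2xx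

theorem statement16 (m : ℕ) (hm : 0 < m)
    (𝒮 : ℝ → ℝ → Matrix (Fin m) (Fin m) ℂ)
    (h𝒮 : MSmooth 𝒮)
    (h𝒮2 : ∀ x t : ℝ, 𝒮 x t * 𝒮 x t = 1)
    (ℱ : ℝ → ℝ → Matrix (Fin m) (Fin m) ℂ)
    (hℱ : ℱ = fun x t => -((1 / 2 : ℂ) • (pd1 𝒮 x t * 𝒮 x t)))
    (heq : ∀ x t : ℝ,
      pd2 𝒮 x t = pd1 (pd1 𝒮) x t
        + (2 : ℂ) • pd1 (fun x t => ℱ x t * (1 + 𝒮 x t)) x t) :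
    ∀ x t : ℝ,
      pd2 𝒮 x t =
        (1 / 2 : ℂ) • (𝒮 x t * pd1 (pd1 𝒮) x t - pd1 (pd1 𝒮) x t * 𝒮 x t) :=
  statement16_general m 𝒮 h𝒮 h𝒮2 ℱ hℱ heq
end
end

section
/- Let θ : ℝ² → ℝ be smooth (variables (x,x̄)), let f : ℝ → ℂ be a smooth nowhere-vanishing function of x̄ alone, and set g(x,x̄) = f(x̄)(cos(θ/2) I₂ + sin(θ/2) 𝕀), where 𝕀 = [[0,−1],[1,0]]. Let J = diag(1,−1) and g̃ = J g J. Then g is invertible at every point, and g satisfies the equation (g_x g^{-1})_{x̄} = (1/4)(g g̃^{-1} − g̃ g^{-1}) if and only if θ solves the sine-Gordon equation θ_{x x̄} = sin θ. -/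
open Matrix

noncomputable section

/-!
With `rot φ = cos φ • 1 + sin φ • 𝕀` the rotation by `φ`, we have `g = f • rot (θ/2)` and
`g̃ = f • rot (-θ/2)`, since conjugation by `J` reverses rotations. As `f` does not depend on `x`,
`g_x g⁻¹ = (θ_x / 2) • 𝕀`, whose `x̄`-derivative is `(θ_{x x̄} / 2) • 𝕀`, while the scalar `f`
cancels from `g g̃⁻¹ - g̃ g⁻¹ = rot θ - rot (-θ) = (2 sin θ) • 𝕀`.
-/

namespace SineGordon

def 𝕀 : Matrix (Fin 2) (Fin 2) ℂ := !![0, -1; 1, 0]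

def rot (φ : ℝ) : Matrix (Fin 2) (Fin 2) ℂ :=
  ((Real.cos φ : ℝ) : ℂ) • (1 : Matrix (Fin 2) (Fin 2) ℂ) + ((Real.sin φ : ℝ) : ℂ) • 𝕀

lemma rot_eq_of (φ : ℝ) :
    rot φ = !![(Real.cos φ : ℂ), -(Real.sin φ : ℂ); (Real.sin φ : ℂ), (Real.cos φ : ℂ)] := by
  ext i j; fin_cases i <;> fin_cases j <;> simp [rot, 𝕀]

lemma 𝕀_ne_zero : 𝕀 ≠ 0 := fun h => by simpa [𝕀] using congr_fun (congr_fun h 1) 0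

lemma rot_zero : rot 0 = 1 := by simp [rot]

lemma rot_mul_rot (φ ψ : ℝ) : rot φ * rot ψ = rot (φ + ψ) := by
  simp only [rot_eq_of, Real.cos_add, Real.sin_add]
  ext i j; fin_cases i <;> fin_cases j <;> simp [Matrix.mul_apply] <;> ring

lemma rot_sub_rot_neg (φ : ℝ) : rot φ - rot (-φ) = (2 * (Real.sin φ : ℂ)) • 𝕀 := by
  simp only [rot, Real.cos_neg, Real.sin_neg]
  push_cast
  module

lemma conj_smul_rot (c : ℂ) (φ : ℝ) :
    !![1, 0; 0, -1] * (c • rot φ) * !![1, 0; 0, -1] = c • rot (-φ) := by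
  rw [Matrix.mul_smul, Matrix.smul_mul]
  congr 1
  simp only [rot_eq_of, Real.cos_neg, Real.sin_neg]
  ext i j; fin_cases i <;> fin_cases j <;> simp

lemma smul_rot_mul_inv_smul_rot_neg {c : ℂ} (hc : c ≠ 0) (φ : ℝ) :
    c • rot φ * (c⁻¹ • rot (-φ)) = 1 := by
  rw [smul_mul_smul, rot_mul_rot, add_neg_cancel, rot_zero, mul_inv_cancel₀ hc, one_smul]

lemma isUnit_smul_rot {c : ℂ} (hc : c ≠ 0) (φ : ℝ) : IsUnit (c • rot φ) :=
  IsUnit.of_mul_eq_one _ (smul_rot_mul_inv_smul_rot_neg hc φ)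

lemma inv_smul_rot {c : ℂ} (hc : c ≠ 0) (φ : ℝ) : (c • rot φ)⁻¹ = c⁻¹ • rot (-φ) :=
  Matrix.inv_eq_right_inv (smul_rot_mul_inv_smul_rot_neg hc φ)

lemma smul_rot_mul_inv_smul_rot {c : ℂ} (hc : c ≠ 0) (φ ψ : ℝ) :
    c • rot φ * (c • rot ψ)⁻¹ = rot (φ - ψ) := by
  rw [inv_smul_rot hc, smul_mul_smul, mul_inv_cancel₀ hc, one_smul, rot_mul_rot, sub_eq_add_neg]

lemma smul_rot_mul_inv_conj_sub_conj_mul_inv {c : ℂ} (hc : c ≠ 0) (φ : ℝ) :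
    c • rot φ * (!![1, 0; 0, -1] * (c • rot φ) * !![1, 0; 0, -1])⁻¹
      - !![1, 0; 0, -1] * (c • rot φ) * !![1, 0; 0, -1] * (c • rot φ)⁻¹
      = (2 * (Real.sin (2 * φ) : ℂ)) • 𝕀 := by
  rw [conj_smul_rot, smul_rot_mul_inv_smul_rot hc, smul_rot_mul_inv_smul_rot hc, sub_neg_eq_add,
    ← two_mul, neg_sub_left, ← two_mul, rot_sub_rot_neg]

lemma of_deriv_apply_eq {ι κ : Type*} {M : ℝ → Matrix ι κ ℂ} {M' : Matrix ι κ ℂ} {t : ℝ}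
    (h : ∀ i j, HasDerivAt (fun s => M s i j) (M' i j) t) :
    Matrix.of (fun i j => deriv (fun s => M s i j) t) = M' := by
  ext i j; exact (h i j).deriv

lemma hasDerivAt_smul_const_apply {ι κ : Type*} {c : ℝ → ℂ} {c' : ℂ} {t : ℝ}
    (hc : HasDerivAt c c' t) (A : Matrix ι κ ℂ) (i : ι) (j : κ) :
    HasDerivAt (fun s => (c s • A) i j) ((c' • A) i j) t := by
  simpa only [Matrix.smul_apply, smul_eq_mul] using hc.mul_const (A i j)

lemma hasDerivAt_smul_rot_apply {φ : ℝ → ℝ} {φ' t : ℝ} (hφ : HasDerivAt φ φ' t) (c : ℂ)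
    (i j : Fin 2) :
    HasDerivAt (fun s => (c • rot (φ s)) i j) (((c * φ') • (𝕀 * rot (φ t))) i j) t := by
  have hcos := (hφ.cos.ofReal_comp).const_mul c
  have hsin := (hφ.sin.ofReal_comp).const_mul c
  push_cast at hcos hsin
  simp only [rot_eq_of, 𝕀]
  fin_cases i <;> fin_cases j <;> simp
  exacts [hcos.congr_deriv (by ring), hsin.neg.congr_deriv (by ring),
    hsin.congr_deriv (by ring), hcos.congr_deriv (by ring)]

lemma pd1_smul_rot_mul_inv {φ : ℝ → ℝ → ℝ} {c : ℝ → ℂ} {x t φ' : ℝ} (hc : c t ≠ 0)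
    (hφ : HasDerivAt (fun x' => φ x' t) φ' x) :
    pd1 (fun x t => c t • rot (φ x t)) x t * (c t • rot (φ x t))⁻¹ = (φ' : ℂ) • 𝕀 := by
  rw [pd1, of_deriv_apply_eq (hasDerivAt_smul_rot_apply hφ (c t)), inv_smul_rot hc, smul_mul_smul,
    Matrix.mul_assoc, rot_mul_rot, add_neg_cancel, rot_zero, mul_one]
  congr 1
  field_simp

lemma pd2_ofReal_smul {ι κ : Type*} {a : ℝ → ℝ → ℝ} {x t : ℝ} (ha : DifferentiableAt ℝ (a x) t)
    (A : Matrix ι κ ℂ) : pd2 (fun x t => (a x t : ℂ) • A) x t = ((deriv (a x) t : ℝ) : ℂ) • A :=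
  of_deriv_apply_eq (hasDerivAt_smul_const_apply ha.hasDerivAt.ofReal_comp A)

lemma hasDerivAt_deriv_fst {θ : ℝ → ℝ → ℝ} (hθ : Differentiable ℝ fun v : ℝ × ℝ => θ v.1 v.2)
    (x t : ℝ) : HasDerivAt (fun x' => θ x' t) (deriv (fun x' => θ x' t) x) x :=
  have hθt : DifferentiableAt ℝ (fun x' => θ x' t) x :=
    DifferentiableAt.comp (f := fun x' : ℝ => (x', t)) x (hθ (x, t))
      (differentiableAt_id.prodMk (differentiableAt_const t))
  hθt.hasDerivAt

lemma deriv_fst_eq_fderiv {θ : ℝ → ℝ → ℝ}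
    (hθ : Differentiable ℝ fun v : ℝ × ℝ => θ v.1 v.2) (x t : ℝ) :
    deriv (fun x' => θ x' t) x = fderiv ℝ (fun v : ℝ × ℝ => θ v.1 v.2) (x, t) (1, 0) := by
  have hpath : HasDerivAt (fun x' : ℝ => (x', t)) ((1 : ℝ), (0 : ℝ)) x :=
    (hasDerivAt_id x).prodMk (hasDerivAt_const x t)
  exact ((hθ (x, t)).hasFDerivAt.comp_hasDerivAt x hpath).deriv

lemma differentiable_deriv_fst {θ : ℝ → ℝ → ℝ} (hθ : ContDiff ℝ 2 fun v : ℝ × ℝ => θ v.1 v.2)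
    (x : ℝ) : Differentiable ℝ fun t => deriv (fun x' => θ x' t) x := by
  have hθ1 : Differentiable ℝ fun v : ℝ × ℝ => θ v.1 v.2 := hθ.differentiable (by norm_num)
  simp_rw [deriv_fst_eq_fderiv hθ1]
  exact (ContDiff.fderiv_apply (f := fun (_ : ℝ) (v : ℝ × ℝ) => θ v.1 v.2) (n := 1)
    (hθ.comp contDiff_snd) (contDiff_const.prodMk contDiff_id) contDiff_const
    (by norm_num)).differentiable (by norm_num)

end SineGordon

open SineGordon in
theorem statement18_general
    (θ : ℝ → ℝ → ℝ)
    (hθ : ContDiff ℝ (⊤ : ℕ∞) fun v : ℝ × ℝ => θ v.1 v.2)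
    (f : ℝ → ℂ)
    (hf0 : ∀ s : ℝ, f s ≠ 0)
    (II : Matrix (Fin 2) (Fin 2) ℂ) (hII : II = !![0, -1; 1, 0])
    (J : Matrix (Fin 2) (Fin 2) ℂ) (hJ : J = !![1, 0; 0, -1])
    (g : ℝ → ℝ → Matrix (Fin 2) (Fin 2) ℂ)
    (hg : g = fun x xb =>
      f xb • (((Real.cos (θ x xb / 2) : ℝ) : ℂ) • (1 : Matrix (Fin 2) (Fin 2) ℂ)
        + ((Real.sin (θ x xb / 2) : ℝ) : ℂ) • II))
    (gt : ℝ → ℝ → Matrix (Fin 2) (Fin 2) ℂ)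
    (hgt : gt = fun x xb => J * g x xb * J) :
    (∀ x xb : ℝ, IsUnit (g x xb)) ∧
    ((∀ x xb : ℝ,
        pd2 (fun x xb => pd1 g x xb * (g x xb)⁻¹) x xb =
          (1 / 4 : ℂ) • (g x xb * (gt x xb)⁻¹ - gt x xb * (g x xb)⁻¹))
      ↔ (∀ x xb : ℝ,
          deriv (fun s => deriv (fun x' => θ x' s) x) xb = Real.sin (θ x xb))) := by
  subst hII hJ hgt
  replace hg : g = fun x xb => f xb • rot (θ x xb / 2) := hg
  subst hg
  have hθ2 : ContDiff ℝ 2 fun v : ℝ × ℝ => θ v.1 v.2 := hθ.of_le (WithTop.coe_le_coe.2 le_top)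
  have hlog x xb : pd1 (fun x xb => f xb • rot (θ x xb / 2)) x xb * (f xb • rot (θ x xb / 2))⁻¹
      = ((deriv (fun x' => θ x' xb) x / 2 : ℝ) : ℂ) • 𝕀 :=
    pd1_smul_rot_mul_inv (hf0 xb)
      ((hasDerivAt_deriv_fst (hθ2.differentiable (by norm_num)) x xb).div_const 2)
  have hlhs x xb : pd2 (fun x xb => pd1 (fun x xb => f xb • rot (θ x xb / 2)) x xb
      * (f xb • rot (θ x xb / 2))⁻¹) x xb
      = ((deriv (fun s => deriv (fun x' => θ x' s) x) xb / 2 : ℝ) : ℂ) • 𝕀 := by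
    simp only [hlog]
    rw [pd2_ofReal_smul ((differentiable_deriv_fst hθ2 x).div_const 2 xb), deriv_div_const]
  have hrhs x xb : (1 / 4 : ℂ) • (f xb • rot (θ x xb / 2)
      * (!![1, 0; 0, -1] * (f xb • rot (θ x xb / 2)) * !![1, 0; 0, -1])⁻¹
      - !![1, 0; 0, -1] * (f xb • rot (θ x xb / 2)) * !![1, 0; 0, -1]
      * (f xb • rot (θ x xb / 2))⁻¹)
      = ((Real.sin (θ x xb) / 2 : ℝ) : ℂ) • 𝕀 := by
    rw [smul_rot_mul_inv_conj_sub_conj_mul_inv (hf0 xb), mul_div_cancel₀ _ two_ne_zero, smul_smul]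
    congr 1
    push_cast
    ring
  refine ⟨fun x xb => isUnit_smul_rot (hf0 xb) _, ?_⟩
  simp only [hlhs, hrhs, (smul_left_injective ℂ 𝕀_ne_zero).eq_iff, Complex.ofReal_inj,
    div_left_inj' (two_ne_zero' ℝ)]

theorem statement18
    (θ : ℝ → ℝ → ℝ)
    (hθ : ContDiff ℝ (⊤ : ℕ∞) fun v : ℝ × ℝ => θ v.1 v.2)
    (f : ℝ → ℂ)
    (hf : ContDiff ℝ (⊤ : ℕ∞) f)
    (hf0 : ∀ s : ℝ, f s ≠ 0)
    (II : Matrix (Fin 2) (Fin 2) ℂ) (hII : II = !![0, -1; 1, 0])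
    (J : Matrix (Fin 2) (Fin 2) ℂ) (hJ : J = !![1, 0; 0, -1])
    (g : ℝ → ℝ → Matrix (Fin 2) (Fin 2) ℂ)
    (hg : g = fun x xb =>
      f xb • (((Real.cos (θ x xb / 2) : ℝ) : ℂ) • (1 : Matrix (Fin 2) (Fin 2) ℂ)
        + ((Real.sin (θ x xb / 2) : ℝ) : ℂ) • II))
    (gt : ℝ → ℝ → Matrix (Fin 2) (Fin 2) ℂ)
    (hgt : gt = fun x xb => J * g x xb * J) :
    (∀ x xb : ℝ, IsUnit (g x xb)) ∧
    ((∀ x xb : ℝ,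
        pd2 (fun x xb => pd1 g x xb * (g x xb)⁻¹) x xb =
          (1 / 4 : ℂ) • (g x xb * (gt x xb)⁻¹ - gt x xb * (g x xb)⁻¹))
      ↔ (∀ x xb : ℝ,
          deriv (fun s => deriv (fun x' => θ x' s) x) xb = Real.sin (θ x xb))) :=
  statement18_general θ hθ f hf0 II hII J hJ g hg gt hgt
end
end
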